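/- In ℝ³ with coordinates (t,x,y), let K = {(x,y) ∈ ℝ² : x ≥ |y|} and M' = ℝ × (ℝ² ∖ K), an open subset of ℝ³. Let C' = {v = (v_t, v_x, v_y) ∈ ℝ³, v ≠ 0 : −v_t² − v_x² + v_y² ≤ 0, v_x ≥ 0, v_t ≥ 0}, and define the relation ≤ on M' by: p ≤ q iff p = q or there is a Lipschitz curve γ : [0,1] → ℝ³ with image contained in M', γ(0) = p, γ(1) = q, whose derivative lies in C' ∪ {0} almost everywhere. Then for p = (−2,−1,1) and q = (2,1,−2), the causal diamond {z ∈ M' : p ≤ z and z ≤ q} is nonempty but NOT compact; in particular, the point (0,0,0) is a limit of points of the diamond but does not belong to M'. -/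

import Mathlib

open MeasureTheory

/-- `M' = ℝ × (ℝ² ∖ K)` where `K = {(x,y) : x ≥ |y|}` is the causal future of the
origin in `ℝ^{1,1}`; a point `(t,x,y)` lies in `M'` iff `x < |y|`. -/
def exM : Set (ℝ × ℝ × ℝ) := {p | p.2.1 < |p.2.2|}

/-- The future causal cone `C'` of the orthogonally extended `(1,2)`-spacetime
`(ℝ × M, −dt² ⊕ η)`, `η = −dx² + dy²`, with frame `X₁ = ∂ₓ`, `X₂ = ∂ₜ`:
nonzero `v` with `−v_t² − v_x² + v_y² ≤ 0`, `v_x ≥ 0`, `v_t ≥ 0`. -/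
def exCone : Set (ℝ × ℝ × ℝ) :=
  {v | v ≠ 0 ∧ -v.1 ^ 2 - v.2.1 ^ 2 + v.2.2 ^ 2 ≤ 0 ∧ 0 ≤ v.2.1 ∧ 0 ≤ v.1}

/-- The causal relation of `M'`: `p ≤ q` iff `p = q` or there is a Lipschitz
curve from `p` to `q`, staying in `M'`, whose a.e. derivative lies in
`C' ∪ {0}`. -/
def exCausalLE (p q : ℝ × ℝ × ℝ) : Prop :=
  p = q ∨ ∃ (K : NNReal) (γ : ℝ → ℝ × ℝ × ℝ),
    LipschitzWith K γ ∧ γ 0 = p ∧ γ 1 = q ∧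
    (∀ s ∈ Set.Icc (0 : ℝ) 1, γ s ∈ exM) ∧
    ∀ᵐ s ∂(volume : Measure ℝ), s ∈ Set.Icc (0 : ℝ) 1 →
      ∃ v, HasDerivAt γ v s ∧ (v = 0 ∨ v ∈ exCone)

/-!
The diamond of `p = (-2,-1,1)` and `q = (2,1,-2)` contains every point `(0,-ε,0)` with
`0 < ε ≤ 1`: the straight segments from `p` to `(0,-ε,0)` and from `(0,-ε,0)` to `q` have
constant velocities `(2, 1-ε, -1)` and `(2, 1+ε, -2)` in `C'`, and both stay in `x < |y|`.
These points accumulate at the origin, which lies on the boundary of the removed cone `K`,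
so the diamond is not closed, hence not compact.
-/

open Set Filter Topology

theorem exCausalLE_of_hasDerivAt {f f' : ℝ → ℝ × ℝ × ℝ} {p q : ℝ × ℝ × ℝ}
    (hf : ∀ s, HasDerivAt f (f' s) s) (hf' : Continuous f') (h0 : f 0 = p) (h1 : f 1 = q)
    (hM : ∀ s ∈ Icc (0 : ℝ) 1, f s ∈ exM) (hC : ∀ s ∈ Ioo (0 : ℝ) 1, f' s ∈ exCone) :
    exCausalLE p q := by
  obtain ⟨C, hC'⟩ := isCompact_Icc.exists_bound_of_continuousOn hf'.continuousOn
  have hlip : LipschitzOnWith C.toNNReal f (Icc 0 1) :=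
    (convex_Icc 0 1).lipschitzOnWith_of_nnnorm_hasDerivWithin_le
      (fun s _ => (hf s).hasDerivWithinAt) fun s hs => by
        rw [← NNReal.coe_le_coe, coe_nnnorm]; exact (hC' s hs).trans (Real.le_coe_toNNReal C)
  refine Or.inr ⟨C.toNNReal, IccExtend zero_le_one ((Icc 0 1).domRestrict f),
    by rw [← mul_one C.toNNReal]; exact hlip.to_restrict.comp (LipschitzWith.projIcc _),
    (IccExtend_left ..).trans h0, (IccExtend_right ..).trans h1, fun s hs => ?_, ?_⟩
  · rw [IccExtend_of_mem _ _ hs]; exact hM s hs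
  · filter_upwards [Ioo_ae_eq_Icc (μ := volume) (a := (0 : ℝ)) (b := 1)] with s hs hIcc
    have hIoo : s ∈ Ioo (0 : ℝ) 1 := cast hs.symm hIcc
    refine ⟨f' s, (hf s).congr_of_eventuallyEq ?_, Or.inr (hC s hIoo)⟩
    filter_upwards [Ioo_mem_nhds hIoo.1 hIoo.2] with t ht
    exact IccExtend_of_mem _ _ (Ioo_subset_Icc_self ht)

theorem mk_mem_exCone {t x y : ℝ} (ht : 0 < t) (hx : 0 ≤ x) (hy : y ^ 2 ≤ t ^ 2 + x ^ 2) :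
    (t, x, y) ∈ exCone :=
  ⟨fun h => ht.ne' (congrArg Prod.fst h), by linarith, hx, ht.le⟩

theorem exCausalLE_of_segment {p q : ℝ × ℝ × ℝ} (hpq : q - p ∈ exCone)
    (hM : ∀ s ∈ Icc (0 : ℝ) 1, p + s • (q - p) ∈ exM) : exCausalLE p q :=
  exCausalLE_of_hasDerivAt (fun s => ((hasDerivAt_id s).smul_const (q - p)).const_add p)
    continuous_const (by simp) (by simp) hM fun _ _ => by simpa using hpq

theorem exCausalLE_to_negAxis {ε : ℝ} (hε : 0 < ε) (hε1 : ε ≤ 1) :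
    exCausalLE (-2, -1, 1) (0, -ε, 0) := by
  refine exCausalLE_of_segment ?_ fun s hs => ?_
  · simp only [Prod.mk_sub_mk]
    exact mk_mem_exCone (by norm_num) (by linarith) (by nlinarith)
  · simp only [exM, mem_ofPred_eq, Prod.mk_sub_mk, Prod.smul_mk, Prod.mk_add_mk, smul_eq_mul]
    nlinarith [le_abs_self (1 + s * (0 - 1)), hs.1, hs.2]

theorem exCausalLE_from_negAxis {ε : ℝ} (hε : 0 < ε) :
    exCausalLE (0, -ε, 0) (2, 1, -2) := by
  refine exCausalLE_of_segment ?_ fun s hs => ?_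
  · simp only [Prod.mk_sub_mk]
    exact mk_mem_exCone (by norm_num) (by linarith) (by nlinarith)
  · simp only [exM, mem_ofPred_eq, Prod.mk_sub_mk, Prod.smul_mk, Prod.mk_add_mk, smul_eq_mul]
    nlinarith [neg_le_abs (0 + s * (-2 - 0)), mul_nonneg hε.le (sub_nonneg.2 hs.2), hs.1]

theorem negAxis_mem_diamond {ε : ℝ} (hε : 0 < ε) (hε1 : ε ≤ 1) :
    (0, -ε, 0) ∈ {z | z ∈ exM ∧ exCausalLE (-2, -1, 1) z ∧ exCausalLE z (2, 1, -2)} :=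
  ⟨by simpa [exM] using hε, exCausalLE_to_negAxis hε hε1, exCausalLE_from_negAxis hε⟩

/-- Example 5.24: for `p = (−2,−1,1)` and `q = (2,1,−2)`, the causal diamond
`J⁺(p) ∩ J⁻(q)` in `M'` is nonempty but not compact; in particular the origin
`(0,0,0)` is a limit point of the diamond which does not belong to `M'`. Hence
global hyperbolicity of a `(n−ν,ν)`-spacetime does not pass to its orthogonal
extension when `ν < n`. -/
theorem orthogonal_extension_not_globally_hyperbolic :
    (({z | z ∈ exM ∧ exCausalLE ((-2 : ℝ), (-1 : ℝ), (1 : ℝ)) z ∧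
        exCausalLE z ((2 : ℝ), (1 : ℝ), (-2 : ℝ))} : Set (ℝ × ℝ × ℝ)).Nonempty) ∧
    ¬ IsCompact ({z | z ∈ exM ∧ exCausalLE ((-2 : ℝ), (-1 : ℝ), (1 : ℝ)) z ∧
        exCausalLE z ((2 : ℝ), (1 : ℝ), (-2 : ℝ))} : Set (ℝ × ℝ × ℝ)) ∧
    ((0 : ℝ), (0 : ℝ), (0 : ℝ)) ∈
      closure {z | z ∈ exM ∧ exCausalLE ((-2 : ℝ), (-1 : ℝ), (1 : ℝ)) z ∧
        exCausalLE z ((2 : ℝ), (1 : ℝ), (-2 : ℝ))} ∧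
    ((0 : ℝ), (0 : ℝ), (0 : ℝ)) ∉ exM := by
  have h_origin : ((0 : ℝ), (0 : ℝ), (0 : ℝ)) ∉ exM := by simp [exM]
  have h_closure : ((0 : ℝ), (0 : ℝ), (0 : ℝ)) ∈
      closure {z | z ∈ exM ∧ exCausalLE ((-2 : ℝ), (-1 : ℝ), (1 : ℝ)) z ∧
        exCausalLE z ((2 : ℝ), (1 : ℝ), (-2 : ℝ))} := by
    have h_lim : Tendsto (fun ε : ℝ => ((0 : ℝ), -ε, (0 : ℝ))) (𝓝[>] 0) (𝓝 (0, 0, 0)) := by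
      simpa using (continuous_const.prodMk (continuous_neg.prodMk continuous_const)).tendsto'
        (0 : ℝ) (0, 0, 0) (by simp) |>.mono_left nhdsWithin_le_nhds
    refine mem_closure_of_tendsto h_lim ?_
    filter_upwards [Ioc_mem_nhdsGT one_pos] with ε hε
    exact negAxis_mem_diamond hε.1 hε.2
  exact ⟨⟨_, negAxis_mem_diamond one_pos le_rfl⟩,
    fun h_compact => h_origin (h_compact.isClosed.closure_subset h_closure).1,
    h_closure, h_origin⟩
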